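/- Let f = (f₁, f₂) : (ℂ²,0) → (ℂ²,0) be a finitely determined holomorphic map germ with Jacobian determinant Δ. Then dim_ℂ O₂/⟨Δ, det(df₁,dΔ)⟩ = dim_ℂ O₂/J(f,Δ) + dim_ℂ O₂/Jf₁, i.e. the colength of ⟨Δ, det(df₁,dΔ)⟩ equals c(f) + μ(f₁), where c(f) = dim_ℂ O₂/J(f,Δ) is the number of cusps of a generic perturbation of f and μ(f₁) is the Milnor number of f₁. -/

import Mathlib

set_option maxHeartbeats 1000000

/-!  STATEMENT 2 (Proposition 5.1 of the paper).  For a finitely determined map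
germ `f = (f₁,f₂) : (ℂ²,0) → (ℂ²,0)` with Jacobian determinant `Δ`,
`dim_ℂ O₂/⟨Δ, det(df₁,dΔ)⟩ = c(f) + μ(f₁)`, where
`c(f) = dim_ℂ O₂/J(f,Δ)` (the number of cusps of a generic perturbation) and
`μ(f₁) = dim_ℂ O₂/Jf₁` is the Milnor number of `f₁`.  Finite determinacy is
recorded through the finite dimensionality of the three quotients it entails. -/

noncomputable def pd (i : Fin 2) (f : MvPowerSeries (Fin 2) ℂ) :
    MvPowerSeries (Fin 2) ℂ :=
  fun m => ((m i : ℂ) + 1) * f (m + Finsupp.single i 1)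

/-- `det2 g h = det(dg, dh)`, the determinant with rows the gradients of `g`, `h`. -/
noncomputable def det2 (g h : MvPowerSeries (Fin 2) ℂ) : MvPowerSeries (Fin 2) ℂ :=
  pd 0 g * pd 1 h - pd 1 g * pd 0 h

/-! ### Auxiliary material -/

local notation "O2" => MvPowerSeries (Fin 2) ℂ

noncomputable instance : IsDomain (MvPowerSeries (Fin 2) ℂ) :=
  NoZeroDivisors.to_isDomain _

lemma aux_pd_zero (i : Fin 2) : pd i (0 : O2) = 0 := by
  funext m
  show ((m i : ℂ) + 1) * 0 = 0
  exact mul_zero _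

lemma aux_det2_zero (g : O2) : det2 g 0 = 0 := by
  unfold det2
  rw [aux_pd_zero, aux_pd_zero]
  ring

open MvPowerSeries Finsupp in
/-- The ring homomorphism `ℂ⟦x,y⟧ → ℂ⟦y⟧` killing `x`. -/
noncomputable def auxPhi : MvPowerSeries (Fin 2) ℂ →+* PowerSeries ℂ where
  toFun f := PowerSeries.mk fun n => MvPowerSeries.coeff (Finsupp.single 1 n) f
  map_zero' := by ext n; simp
  map_one' := by
    ext n
    simp only [PowerSeries.coeff_mk, MvPowerSeries.coeff_one, PowerSeries.coeff_one,
      Finsupp.single_eq_zero]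
  map_add' f g := by ext n; simp
  map_mul' f g := by
    ext n
    simp only [PowerSeries.coeff_mk, MvPowerSeries.coeff_mul, PowerSeries.coeff_mul,
      Finsupp.antidiagonal_single, Finset.sum_map, Function.Embedding.coe_prodMap,
      Function.Embedding.coeFn_mk, Prod.map, PowerSeries.coeff_mk]

lemma aux_phi_coeff (f : O2) (n : ℕ) :
    PowerSeries.coeff n (auxPhi f) = MvPowerSeries.coeff (Finsupp.single 1 n) f := by
  simp [auxPhi]

lemma aux_X0_dvd_iff_phi (f : O2) : (MvPowerSeries.X 0 : O2) ∣ f ↔ auxPhi f = 0 := by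
  rw [MvPowerSeries.X_dvd_iff]
  constructor
  · intro h
    ext n
    rw [aux_phi_coeff, map_zero]
    exact h _ (by simp)
  · intro h m hm
    have hme : m = Finsupp.single 1 (m 1) := by
      ext i
      fin_cases i
      · simpa using hm
      · simp
    have := congrArg (PowerSeries.coeff (m 1)) h
    rw [aux_phi_coeff, map_zero] at this
    rw [hme]
    exact this

lemma aux_phi_one : auxPhi 1 ≠ 0 := by
  intro h
  have := congrArg (PowerSeries.coeff 0) h
  rw [aux_phi_coeff, map_zero] at this
  simp [MvPowerSeries.coeff_one] at this

lemma aux_prime_X0 : Prime (MvPowerSeries.X 0 : O2) := by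
  refine ⟨?_, ?_, ?_⟩
  · intro h
    have := congrArg (MvPowerSeries.coeff (Finsupp.single 0 1)) h
    rw [MvPowerSeries.coeff_X, map_zero] at this
    simp at this
  · intro h
    exact aux_phi_one ((aux_X0_dvd_iff_phi 1).mp (isUnit_iff_dvd_one.mp h))
  · intro a b hab
    rw [aux_X0_dvd_iff_phi] at hab ⊢
    rw [aux_X0_dvd_iff_phi (f := b)]
    rw [map_mul] at hab
    exact mul_eq_zero.mp hab

lemma aux_X0_not_dvd_X1 : ¬ (MvPowerSeries.X 0 : O2) ∣ MvPowerSeries.X 1 := by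
  rw [MvPowerSeries.X_dvd_iff]
  intro h
  have := h (Finsupp.single 1 1) (by simp)
  rw [MvPowerSeries.coeff_X] at this
  simp at this

/-- In a finite-dimensional quotient of `ℂ⟦x,y⟧`, some power of any element of
the maximal ideal lies in the ideal. -/
lemma aux_pow_mem (I : Ideal O2) [hfin : FiniteDimensional ℂ (O2 ⧸ I)] (z : O2)
    (hz : MvPowerSeries.constantCoeff z = 0) : ∃ N, z ^ N ∈ I := by
  set zb := Ideal.Quotient.mk I z with hzb
  set A : ℕ → Ideal (O2 ⧸ I) := fun n => Ideal.span {zb ^ n} with hA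
  have hmono : ∀ n, A (n + 1) ≤ A n := by
    intro n
    rw [hA, Ideal.span_le]
    intro x hx
    rw [Set.mem_singleton_iff] at hx
    subst hx
    rw [pow_succ]
    exact Ideal.mul_mem_right _ _ (Ideal.subset_span rfl)
  have key : ∃ n, A n ≤ A (n + 1) := by
    by_contra hc
    push_neg at hc
    set F : ℕ → ℕ := fun n => Module.finrank ℂ ((A n).restrictScalars ℂ) with hF
    have hFlt : ∀ n, F (n + 1) < F n := by
      intro n
      apply Submodule.finrank_lt_finrank_of_lt
      refine lt_of_le_of_ne (fun x hx => hmono n hx) ?_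
      intro he
      exact hc n (fun x hx => (by rw [he]; exact hx : x ∈ ((A (n + 1)).restrictScalars ℂ)))
    have hsum : ∀ n, F n + n ≤ F 0 := by
      intro n; induction n with
      | zero => simp
      | succ k ih => have := hFlt k; omega
    have := hsum (F 0 + 1)
    omega
  obtain ⟨n, hn⟩ := key
  have hz' : zb ^ n ∈ A (n + 1) := hn (Ideal.subset_span rfl)
  rw [hA, Ideal.mem_span_singleton'] at hz'
  obtain ⟨w, hw⟩ := hz'
  obtain ⟨w', rfl⟩ := Ideal.Quotient.mk_surjective w
  have hmem : z ^ n - w' * z ^ (n + 1) ∈ I := by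
    have : Ideal.Quotient.mk I (z ^ n - w' * z ^ (n + 1)) = 0 := by
      rw [map_sub, map_mul, map_pow, map_pow, ← hzb, ← hw]
      ring
    exact Ideal.Quotient.eq_zero_iff_mem.mp this
  have hunit : IsUnit (1 - w' * z) := by
    rw [MvPowerSeries.isUnit_iff_constantCoeff, map_sub, map_one, map_mul, hz, mul_zero, sub_zero]
    exact isUnit_one
  obtain ⟨g, hg⟩ := hunit
  refine ⟨n, ?_⟩
  have hfactor : z ^ n - w' * z ^ (n + 1) = z ^ n * (1 - w' * z) := by ring
  have hzn : z ^ n = (z ^ n * (1 - w' * z)) * ↑g⁻¹ := by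
    rw [← hg, Units.mul_inv_cancel_right]
  rw [hzn]
  exact Ideal.mul_mem_right _ _ (by rw [← hfactor]; exact hmem)

/-- Regularity: if `⟨D, e⟩` contains powers of both variables and `D ≠ 0`,
then `e` is a nonzerodivisor modulo `D`. -/
lemma aux_reg (D e : O2) (N₁ N₂ : ℕ)
    (hx : (MvPowerSeries.X 0 : O2) ^ N₁ ∈ Ideal.span {D, e})
    (hy : (MvPowerSeries.X 1 : O2) ^ N₂ ∈ Ideal.span {D, e})
    (hD : D ≠ 0) {XX YY : O2} (h : e * XX = D * YY) : D ∣ XX := by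
  rw [Ideal.mem_span_pair] at hx hy
  obtain ⟨p, q, hpq⟩ := hx
  obtain ⟨p', q', hpq'⟩ := hy
  have hA : (MvPowerSeries.X 0 : O2) ^ N₁ * XX = D * (p * XX + q * YY) := by
    linear_combination (-XX) * hpq + q * h
  have hB : (MvPowerSeries.X 1 : O2) ^ N₂ * XX = D * (p' * XX + q' * YY) := by
    linear_combination (-XX) * hpq' + q' * h
  have hcan : D * ((MvPowerSeries.X 1 : O2) ^ N₂ * (p * XX + q * YY)) =
      D * ((MvPowerSeries.X 0 : O2) ^ N₁ * (p' * XX + q' * YY)) := by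
    linear_combination (-(MvPowerSeries.X 1 : O2) ^ N₂) * hA +
      (MvPowerSeries.X 0 : O2) ^ N₁ * hB
  have h2 : (MvPowerSeries.X 1 : O2) ^ N₂ * (p * XX + q * YY) =
      (MvPowerSeries.X 0 : O2) ^ N₁ * (p' * XX + q' * YY) :=
    mul_left_cancel₀ hD hcan
  have hdvd : (MvPowerSeries.X 0 : O2) ^ N₁ ∣ (p * XX + q * YY) := by
    have hd1 : (MvPowerSeries.X 0 : O2) ^ N₁ ∣
        (MvPowerSeries.X 1 : O2) ^ N₂ * (p * XX + q * YY) := ⟨_, h2⟩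
    have hnd : ¬ (MvPowerSeries.X 0 : O2) ∣ (MvPowerSeries.X 1 : O2) ^ N₂ := fun hc =>
      aux_X0_not_dvd_X1 (aux_prime_X0.dvd_of_dvd_pow hc)
    exact aux_prime_X0.pow_dvd_of_dvd_mul_left _ hnd hd1
  obtain ⟨C, hC⟩ := hdvd
  refine ⟨C, ?_⟩
  have hfin : (MvPowerSeries.X 0 : O2) ^ N₁ * XX =
      (MvPowerSeries.X 0 : O2) ^ N₁ * (D * C) := by
    linear_combination hA + D * hC
  exact mul_left_cancel₀ (pow_ne_zero _ aux_prime_X0.ne_zero) hfin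

theorem stmt2 (f₁ f₂ : MvPowerSeries (Fin 2) ℂ)
    (Δ : MvPowerSeries (Fin 2) ℂ) (hΔ : Δ = det2 f₁ f₂)
    (J₁ I₂ J : Ideal (MvPowerSeries (Fin 2) ℂ))
    -- the Jacobian ideal of `f₁`
    (hJ₁ : J₁ = Ideal.span {pd 0 f₁, pd 1 f₁})
    -- the ideal `⟨Δ, det(df₁, dΔ)⟩`
    (hI₂ : I₂ = Ideal.span {Δ, det2 f₁ Δ})
    -- `J(f,Δ)`: the ideal of the 2×2 minors of the Jacobian of `(f₁, f₂, Δ)`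
    (hJ : J = Ideal.span {det2 f₁ f₂, det2 f₁ Δ, det2 f₂ Δ})
    -- finite determinacy of `f`: all the relevant quotients are finite dimensional
    (hfin₂ : FiniteDimensional ℂ (MvPowerSeries (Fin 2) ℂ ⧸ I₂))
    (hfinJ : FiniteDimensional ℂ (MvPowerSeries (Fin 2) ℂ ⧸ J))
    (hfin₁ : FiniteDimensional ℂ (MvPowerSeries (Fin 2) ℂ ⧸ J₁)) :
    Module.finrank ℂ (MvPowerSeries (Fin 2) ℂ ⧸ I₂) =
      Module.finrank ℂ (MvPowerSeries (Fin 2) ℂ ⧸ J) +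
        Module.finrank ℂ (MvPowerSeries (Fin 2) ℂ ⧸ J₁) := by
  classical
  have hdet : ∀ g h : O2, det2 g h = pd 0 g * pd 1 h - pd 1 g * pd 0 h := fun _ _ => rfl
  obtain ⟨a, ha⟩ : ∃ x : O2, x = pd 0 f₁ := ⟨_, rfl⟩
  obtain ⟨b, hb⟩ : ∃ x : O2, x = pd 1 f₁ := ⟨_, rfl⟩
  obtain ⟨c, hc⟩ : ∃ x : O2, x = pd 0 f₂ := ⟨_, rfl⟩
  obtain ⟨d, hd⟩ : ∃ x : O2, x = pd 1 f₂ := ⟨_, rfl⟩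
  obtain ⟨u, hu⟩ : ∃ x : O2, x = pd 0 Δ := ⟨_, rfl⟩
  obtain ⟨v, hv⟩ : ∃ x : O2, x = pd 1 Δ := ⟨_, rfl⟩
  have hΔeq : Δ = a * d - b * c := by rw [hΔ, hdet, ha, hb, hc, hd]
  have hI₂' : I₂ = Ideal.span {Δ, a * v - b * u} := by rw [hI₂, hdet, ha, hb, hu, hv]
  have hJ' : J = Ideal.span {Δ, a * v - b * u, c * v - d * u} := by
    rw [hJ, ← hΔ, hdet, hdet, ha, hb, hc, hd, hu, hv]
  have hJ₁' : J₁ = Ideal.span {a, b} := by rw [hJ₁, ha, hb]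
  -- powers of the variables lie in I₂
  obtain ⟨N₁, hxN⟩ := aux_pow_mem (hfin := hfin₂) I₂ (MvPowerSeries.X 0)
    (MvPowerSeries.constantCoeff_X 0)
  obtain ⟨N₂, hyN⟩ := aux_pow_mem (hfin := hfin₂) I₂ (MvPowerSeries.X 1)
    (MvPowerSeries.constantCoeff_X 1)
  -- Δ ≠ 0
  have hΔ0 : Δ ≠ 0 := by
    intro h0
    rw [hI₂, h0, aux_det2_zero] at hxN
    have hset : ({(0 : O2), 0} : Set O2) = {0} := by simp
    rw [hset, Ideal.mem_span_singleton'] at hxN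
    obtain ⟨w, hw⟩ := hxN
    rw [mul_zero] at hw
    exact pow_ne_zero _ aux_prime_X0.ne_zero hw.symm
  have hxN' : (MvPowerSeries.X 0 : O2) ^ N₁ ∈ Ideal.span {Δ, a * v - b * u} := hI₂' ▸ hxN
  have hyN' : (MvPowerSeries.X 1 : O2) ^ N₂ ∈ Ideal.span {Δ, a * v - b * u} := hI₂' ▸ hyN
  have reg : ∀ XX YY : O2, (a * v - b * u) * XX = Δ * YY → Δ ∣ XX := fun XX YY h =>
    aux_reg Δ (a * v - b * u) N₁ N₂ hxN' hyN' hΔ0 h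
  -- the colon ideal computation: h * e₂ ∈ I₂ ↔ h ∈ J₁
  have hcolon : ∀ h : O2, h * (c * v - d * u) ∈ I₂ ↔ h ∈ J₁ := by
    intro h
    constructor
    · intro hmem
      rw [hI₂', Ideal.mem_span_pair] at hmem
      obtain ⟨α, β, hαβ⟩ := hmem
      have h1 : (a * v - b * u) * (h * c - β * a) = Δ * (α * a + h * u) := by
        linear_combination (-a) * hαβ + (-(h * u)) * hΔeq
      have h2 : (a * v - b * u) * (h * d - β * b) = Δ * (α * b + h * v) := by
        linear_combination (-b) * hαβ + (-(h * v)) * hΔeq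
      obtain ⟨s, hs⟩ := reg _ _ h1
      obtain ⟨t, ht⟩ := reg _ _ h2
      have hfinal : h * Δ = (t * a - s * b) * Δ := by
        linear_combination a * ht - b * hs + h * hΔeq
      have hh : h = t * a - s * b := mul_right_cancel₀ hΔ0 hfinal
      rw [hJ₁', Ideal.mem_span_pair]
      exact ⟨t, -s, by linear_combination -hh⟩
    · intro hh
      rw [hJ₁', Ideal.mem_span_pair] at hh
      obtain ⟨p, q, hpq⟩ := hh
      rw [hI₂', Ideal.mem_span_pair]
      refine ⟨-(p * u + q * v), p * c + q * d, ?_⟩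
      linear_combination (-(p * u + q * v)) * hΔeq + (c * v - d * u) * hpq
  -- module-theoretic bookkeeping
  haveI := hfin₂
  haveI := hfinJ
  haveI := hfin₁
  set e₂ : O2 := c * v - d * u with he₂
  -- the map χ : O2 ⧸ J₁ → O2 ⧸ I₂, multiplication by e₂
  have hkerle : (J₁ : Submodule O2 O2) ≤ LinearMap.ker
      (LinearMap.toSpanSingleton O2 (O2 ⧸ I₂) (Submodule.Quotient.mk e₂)) := by
    intro h hh
    rw [LinearMap.mem_ker, LinearMap.toSpanSingleton_apply, ← Submodule.Quotient.mk_smul,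
      smul_eq_mul, Submodule.Quotient.mk_eq_zero]
    exact (hcolon h).mpr hh
  set χ₀ : (O2 ⧸ J₁) →ₗ[O2] (O2 ⧸ I₂) :=
    Submodule.liftQ (J₁ : Submodule O2 O2)
      (LinearMap.toSpanSingleton O2 (O2 ⧸ I₂) (Submodule.Quotient.mk e₂)) hkerle with hχ₀
  set χ : (O2 ⧸ J₁) →ₗ[ℂ] (O2 ⧸ I₂) := χ₀.restrictScalars ℂ with hχ
  have hχapp : ∀ h : O2, χ (Submodule.Quotient.mk h) = Submodule.Quotient.mk (h * e₂) := by
    intro h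
    rw [hχ, LinearMap.restrictScalars_apply, hχ₀, Submodule.liftQ_apply,
      LinearMap.toSpanSingleton_apply, ← Submodule.Quotient.mk_smul, smul_eq_mul]
  have hχinj : Function.Injective χ := by
    rw [← LinearMap.ker_eq_bot]
    rw [Submodule.eq_bot_iff]
    intro x hx
    obtain ⟨h, rfl⟩ := Submodule.Quotient.mk_surjective _ x
    rw [LinearMap.mem_ker, hχapp, Submodule.Quotient.mk_eq_zero] at hx
    rw [Submodule.Quotient.mk_eq_zero]
    exact (hcolon h).mp hx
  -- the map θ : O2 ⧸ I₂ → O2 ⧸ J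
  have hI₂J : (I₂ : Submodule O2 O2) ≤ LinearMap.ker (Submodule.mkQ (J : Submodule O2 O2)) := by
    rw [Submodule.ker_mkQ]
    rw [hI₂', hJ']
    apply Ideal.span_mono
    intro x hx
    rcases hx with h | h
    · exact Or.inl h
    · exact Or.inr (Or.inl h)
  set θ₀ : (O2 ⧸ I₂) →ₗ[O2] (O2 ⧸ J) :=
    Submodule.liftQ (I₂ : Submodule O2 O2) (Submodule.mkQ (J : Submodule O2 O2)) hI₂J with hθ₀
  set θ : (O2 ⧸ I₂) →ₗ[ℂ] (O2 ⧸ J) := θ₀.restrictScalars ℂ with hθ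
  have hθapp : ∀ h : O2, θ (Submodule.Quotient.mk h) = Submodule.Quotient.mk h := by
    intro h
    rw [hθ, LinearMap.restrictScalars_apply, hθ₀, Submodule.liftQ_apply, Submodule.mkQ_apply]
  have hθsurj : LinearMap.range θ = ⊤ := by
    rw [Submodule.eq_top_iff']
    intro x
    obtain ⟨h, rfl⟩ := Submodule.Quotient.mk_surjective _ x
    exact ⟨Submodule.Quotient.mk h, hθapp h⟩
  have he₂J : e₂ ∈ J := by
    rw [hJ']
    exact Ideal.subset_span (Or.inr (Or.inr rfl))
  have hθker : LinearMap.ker θ = LinearMap.range χ := by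
    apply le_antisymm
    · intro x hx
      obtain ⟨h, rfl⟩ := Submodule.Quotient.mk_surjective _ x
      rw [LinearMap.mem_ker, hθapp, Submodule.Quotient.mk_eq_zero] at hx
      -- h ∈ J = I₂ ⊔ ⟨e₂⟩
      have hsup : h ∈ (I₂ : Submodule O2 O2) ⊔ (Ideal.span {e₂} : Ideal O2) := by
        have hle : J ≤ I₂ ⊔ (Ideal.span {e₂} : Ideal O2) := by
          rw [hJ', Ideal.span_le]
          intro x hx
          rcases hx with h' | h' | h'
          · exact Submodule.mem_sup_left (by rw [hI₂']; exact Ideal.subset_span (Or.inl h'))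
          · exact Submodule.mem_sup_left
              (by rw [hI₂']; exact Ideal.subset_span (Or.inr h'))
          · exact Submodule.mem_sup_right (by rw [h']; exact Ideal.subset_span rfl)
        exact hle hx
      rw [Submodule.mem_sup] at hsup
      obtain ⟨y, hy, z, hz, rfl⟩ := hsup
      rw [Ideal.mem_span_singleton'] at hz
      obtain ⟨w, hw⟩ := hz
      refine ⟨Submodule.Quotient.mk w, ?_⟩
      rw [hχapp, hw]
      rw [Submodule.Quotient.eq]
      simpa using Submodule.neg_mem _ hy
    · rintro x ⟨w, rfl⟩
      obtain ⟨h, rfl⟩ := Submodule.Quotient.mk_surjective _ w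
      rw [LinearMap.mem_ker, hχapp, hθapp, Submodule.Quotient.mk_eq_zero]
      exact Ideal.mul_mem_left _ _ he₂J
  -- rank-nullity
  have hrank := LinearMap.finrank_range_add_finrank_ker θ
  rw [hθsurj, hθker] at hrank
  have h1 : Module.finrank ℂ (⊤ : Submodule ℂ (O2 ⧸ J)) =
      Module.finrank ℂ (O2 ⧸ J) := finrank_top ℂ _
  have h2 : Module.finrank ℂ (O2 ⧸ J₁) =
      Module.finrank ℂ (LinearMap.range χ) :=
    (LinearEquiv.ofInjective χ hχinj).finrank_eq
  omega
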